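/- arXiv:1506.01158 — 2 statements merged into one kernel-verified Lean document; each statement's English description precedes it below -/
import Mathlib

section
/- Let $G$ be the set of càdlàg functions $g : [\sigma_g, 2] \to [-1,1]$ with $\sigma_g \in [-1,1]$, such that $g$ is constant on $[1,2]$. For $g, h \in G$, let $\Lambda[g,h]$ be the set of strictly increasing bijections $\lambda : [\sigma_g, 2] \to [\sigma_h, 2]$ with $\gamma_{g,h}(\lambda) := \sup_{\sigma_g \le t < s \le 2} |\log \frac{\lambda(s)-\lambda(t)}{s-t}| < \infty$, and set $d(g,h,\lambda) = \sup_{t \in [\sigma_g,2]} |g(t) - h(\lambda(t))|$, $\rho(g,h) = \inf_{\lambda \in \Lambda[g,h]} (\gamma_{g,h}(\lambda) \vee d(g,h,\lambda))$, and $d(g,h) = \rho(g,h) \vee |\sigma_g - \sigma_h|$. Then $d$ is a metric on $G$. -/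
open scoped ENNReal

/-- An element of `G`: a càdlàg path `g : [σ, 2] → [-1,1]` with `σ ∈ [-1,1]`,
constant on `[1,2]`.  The underlying function is defined on all of `ℝ` and
normalized to be constant to the left of `σ` and to the right of `2`. -/
structure GPath where
  σ : ℝ
  hσ : σ ∈ Set.Icc (-1 : ℝ) 1
  f : ℝ → ℝ
  mem_range : ∀ t ∈ Set.Icc σ 2, f t ∈ Set.Icc (-1 : ℝ) 1
  right_cont : ∀ t ∈ Set.Ico σ 2, ContinuousWithinAt f (Set.Ici t) t
  left_lim : ∀ t ∈ Set.Ioc σ 2, ∃ L : ℝ, Filter.Tendsto f (nhdsWithin t (Set.Iio t)) (nhds L)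
  const_tail : ∀ t ∈ Set.Icc (1 : ℝ) 2, f t = f 1
  ext_left : ∀ t, t ≤ σ → f t = f σ
  ext_right : ∀ t, 2 ≤ t → f t = f 2

/-- The logarithmic distortion `γ_{g,h}(λ)` of a time change. -/
noncomputable def gamma (g : GPath) (l : ℝ → ℝ) : ℝ≥0∞ :=
  ⨆ p : {p : ℝ × ℝ // g.σ ≤ p.1 ∧ p.1 < p.2 ∧ p.2 ≤ 2},
    ENNReal.ofReal |Real.log ((l p.1.2 - l p.1.1) / (p.1.2 - p.1.1))|

/-- `Λ[g,h]`: strictly increasing bijections `[σ_g,2] → [σ_h,2]` of finite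
logarithmic distortion. -/
def Lam (g h : GPath) : Set (ℝ → ℝ) :=
  {l | StrictMonoOn l (Set.Icc g.σ 2) ∧ l '' Set.Icc g.σ 2 = Set.Icc h.σ 2 ∧
    gamma g l ≠ ⊤}

/-- `d(g,h,λ) = sup_{t ∈ [σ_g,2]} |g(t) - h(λ(t))|`. -/
noncomputable def dSup (g h : GPath) (l : ℝ → ℝ) : ℝ≥0∞ :=
  ⨆ t : Set.Icc g.σ 2, ENNReal.ofReal |g.f t - h.f (l t)|

/-- `ρ(g,h) = inf_{λ ∈ Λ[g,h]} (γ_{g,h}(λ) ∨ d(g,h,λ))`. -/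
noncomputable def rho (g h : GPath) : ℝ≥0∞ :=
  ⨅ l ∈ Lam g h, max (gamma g l) (dSup g h l)

/-- `d(g,h) = ρ(g,h) ∨ |σ_g - σ_h|`. -/
noncomputable def Gdist (g h : GPath) : ℝ :=
  (max (rho g h) (ENNReal.ofReal |g.σ - h.σ|)).toReal


/-!
Inverting a time change inverts its slopes, so `γ(λ⁻¹) = γ(λ)` and `d(h, g, λ⁻¹) = d(g, h, λ)`;
composing two time changes multiplies slopes and adds the logarithms, so `γ` and `d` are
subadditive. Symmetry and the triangle inequality for `ρ` follow, and `Λ[g, h]` always contains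
the affine time change, so `ρ` is finite. If `d(g, h) = 0`, then `σ_g = σ_h`, and a time change
`λ` fixing `σ` with `γ(λ) ≤ ε ≤ 1` moves no point by more than `6ε`; right continuity of `g` and `h`
then forces `g(t) = h(t)` on `[σ, 2)`, and the normalisation of the paths does the rest.
-/

open Set Function Filter Topology

namespace Real

theorem abs_log_div_le_add {a b c : ℝ} (hb : b ≠ 0) :
    |log (c / a)| ≤ |log (b / a)| + |log (c / b)| := by
  rcases eq_or_ne a 0 with rfl | ha
  · simp
  rcases eq_or_ne c 0 with rfl | hc
  · simp
  have hcab : c / a = b / a * (c / b) := by field_simp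
  rw [hcab, log_mul (div_ne_zero hb ha) (div_ne_zero hc hb)]
  exact abs_add_le _ _

theorem abs_log_div_comm (a b : ℝ) : |log (a / b)| = |log (b / a)| := by
  rw [← inv_div, log_inv, abs_neg]

end Real

theorem StrictMonoOn.invFunOn {α β : Type*} [LinearOrder α] [Preorder β] [Nonempty α]
    {f : α → β} {s : Set α} {t : Set β} (hf : StrictMonoOn f s) (hst : SurjOn f s t) :
    StrictMonoOn (invFunOn f s) t := by
  intro u hu v hv huv
  rw [← hf.lt_iff_lt (hst.mapsTo_invFunOn hu) (hst.mapsTo_invFunOn hv),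
    hst.rightInvOn_invFunOn hu, hst.rightInvOn_invFunOn hv]
  exact huv

namespace GPath

theorem σ_lt_two (g : GPath) : g.σ < 2 := g.hσ.2.trans_lt one_lt_two

theorem σ_mem_Icc (g : GPath) : g.σ ∈ Icc g.σ 2 := ⟨le_rfl, g.σ_lt_two.le⟩

theorem ext {g h : GPath} (hσ : g.σ = h.σ) (hf : g.f = h.f) : g = h := by
  cases g
  cases h
  subst hσ hf
  rfl

end GPath

section TimeChanges

variable {f g h : GPath} {l l' : ℝ → ℝ}

theorem le_gamma {t s : ℝ} (ht : g.σ ≤ t) (hts : t < s) (hs : s ≤ 2) :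
    ENNReal.ofReal |Real.log ((l s - l t) / (s - t))| ≤ gamma g l :=
  le_iSup (fun p : {p : ℝ × ℝ // g.σ ≤ p.1 ∧ p.1 < p.2 ∧ p.2 ≤ 2} =>
    ENNReal.ofReal |Real.log ((l p.1.2 - l p.1.1) / (p.1.2 - p.1.1))|) ⟨(t, s), ht, hts, hs⟩

theorem gamma_le {c : ℝ≥0∞}
    (hc : ∀ t s, g.σ ≤ t → t < s → s ≤ 2 →
      ENNReal.ofReal |Real.log ((l s - l t) / (s - t))| ≤ c) :
    gamma g l ≤ c :=
  iSup_le fun ⟨⟨t, s⟩, ht, hts, hs⟩ => hc t s ht hts hs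

theorem le_dSup {t : ℝ} (ht : t ∈ Icc g.σ 2) :
    ENNReal.ofReal |g.f t - h.f (l t)| ≤ dSup g h l :=
  le_iSup (fun t : Icc g.σ 2 => ENNReal.ofReal |g.f t - h.f (l t)|) ⟨t, ht⟩

theorem dSup_le {c : ℝ≥0∞} (hc : ∀ t ∈ Icc g.σ 2, ENNReal.ofReal |g.f t - h.f (l t)| ≤ c) :
    dSup g h l ≤ c :=
  iSup_le fun ⟨t, ht⟩ => hc t ht

theorem dSup_le_two (hl : MapsTo l (Icc g.σ 2) (Icc h.σ 2)) : dSup g h l ≤ 2 := by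
  refine dSup_le fun t ht => ?_
  have hgt := g.mem_range t ht
  have hht := h.mem_range (l t) (hl ht)
  rw [← ENNReal.ofReal_ofNat]
  exact ENNReal.ofReal_le_ofReal (abs_sub_le_iff.2 ⟨by linarith [hgt.2, hht.1],
    by linarith [hgt.1, hht.2]⟩)

theorem rho_le (hl : l ∈ Lam g h) : rho g h ≤ max (gamma g l) (dSup g h l) :=
  iInf₂_le l hl

theorem bijOn_of_mem_Lam (hl : l ∈ Lam g h) : BijOn l (Icc g.σ 2) (Icc h.σ 2) :=
  hl.2.1 ▸ hl.1.injOn.bijOn_image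

theorem apply_σ_of_mem_Lam (hl : l ∈ Lam g h) : l g.σ = h.σ := by
  obtain ⟨t, ht, hlt⟩ := (bijOn_of_mem_Lam hl).surjOn h.σ_mem_Icc
  have hσt : l g.σ ≤ l t := hl.1.monotoneOn g.σ_mem_Icc ht ht.1
  exact le_antisymm (hlt ▸ hσt) ((bijOn_of_mem_Lam hl).mapsTo g.σ_mem_Icc).1

theorem max_gamma_dSup_ne_top (hl : l ∈ Lam g h) : max (gamma g l) (dSup g h l) ≠ ⊤ :=
  max_ne_top hl.2.2 (ne_top_of_le_ne_top ENNReal.ofNat_ne_top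
    (dSup_le_two (bijOn_of_mem_Lam hl).mapsTo))

theorem gamma_affine_le (g : GPath) (c b : ℝ) :
    gamma g (c * · + b) ≤ ENNReal.ofReal |Real.log c| := by
  refine gamma_le fun t s _ hts _ => ?_
  have hslope : (c * s + b - (c * t + b)) / (s - t) = c := by
    field_simp [sub_ne_zero.2 hts.ne']
    ring
  rw [hslope]

theorem Lam_nonempty (g h : GPath) : (Lam g h).Nonempty := by
  set c := (2 - h.σ) / (2 - g.σ)
  have hg : 2 - g.σ ≠ 0 := (sub_pos.2 g.σ_lt_two).ne'
  have hc : 0 < c := div_pos (sub_pos.2 h.σ_lt_two) (sub_pos.2 g.σ_lt_two)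
  refine ⟨(c * · + (h.σ - c * g.σ)), ((strictMono_mul_left_of_pos hc).add_const _).strictMonoOn _,
    ?_, ne_top_of_le_ne_top ENNReal.ofReal_ne_top (gamma_affine_le g _ _)⟩
  have hc2 : c * (2 - g.σ) = 2 - h.σ := div_mul_cancel₀ _ hg
  rw [image_affine_Icc' hc]
  congr 1 <;> linarith

theorem rho_ne_top (g h : GPath) : rho g h ≠ ⊤ :=
  have ⟨_, hl⟩ := Lam_nonempty g h
  ne_top_of_le_ne_top (max_gamma_dSup_ne_top hl) (rho_le hl)

theorem gamma_id (g : GPath) : gamma g id = 0 := by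
  simpa [Function.id_def] using gamma_affine_le g 1 0

theorem rho_self (g : GPath) : rho g g = 0 := by
  have hid : id ∈ Lam g g := ⟨strictMonoOn_id, image_id _, by simp [gamma_id]⟩
  refine nonpos_iff_eq_zero.1 ((rho_le hid).trans (max_le (gamma_id g).le (dSup_le fun t _ => ?_)))
  simp

theorem gamma_invFunOn_le (hl : l ∈ Lam g h) :
    gamma h (invFunOn l (Icc g.σ 2)) ≤ gamma g l := by
  have hsurj := (bijOn_of_mem_Lam hl).surjOn
  refine gamma_le fun u v hu huv hv => ?_
  have hu' : u ∈ Icc h.σ 2 := ⟨hu, huv.le.trans hv⟩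
  have hv' : v ∈ Icc h.σ 2 := ⟨hu.trans huv.le, hv⟩
  have hlu := hsurj.rightInvOn_invFunOn hu'
  have hlv := hsurj.rightInvOn_invFunOn hv'
  calc ENNReal.ofReal |Real.log ((invFunOn l (Icc g.σ 2) v - invFunOn l (Icc g.σ 2) u) / (v - u))|
      = ENNReal.ofReal |Real.log ((l (invFunOn l (Icc g.σ 2) v) - l (invFunOn l (Icc g.σ 2) u)) /
          (invFunOn l (Icc g.σ 2) v - invFunOn l (Icc g.σ 2) u))| := by
        rw [hlu, hlv, Real.abs_log_div_comm]
    _ ≤ gamma g l := le_gamma (hsurj.mapsTo_invFunOn hu').1 (hl.1.invFunOn hsurj hu' hv' huv)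
        (hsurj.mapsTo_invFunOn hv').2

theorem dSup_invFunOn_le (hl : l ∈ Lam g h) :
    dSup h g (invFunOn l (Icc g.σ 2)) ≤ dSup g h l := by
  have hsurj := (bijOn_of_mem_Lam hl).surjOn
  refine dSup_le fun u hu => ?_
  have hle := le_dSup (h := h) (l := l) (hsurj.mapsTo_invFunOn hu)
  rwa [hsurj.rightInvOn_invFunOn hu, abs_sub_comm] at hle

theorem invFunOn_mem_Lam (hl : l ∈ Lam g h) : invFunOn l (Icc g.σ 2) ∈ Lam h g := by
  have hbij := bijOn_of_mem_Lam hl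
  exact ⟨hl.1.invFunOn hbij.surjOn, (hbij.symm hbij.invOn_invFunOn.symm).image_eq,
    ne_top_of_le_ne_top hl.2.2 (gamma_invFunOn_le hl)⟩

theorem rho_le_rho_swap (g h : GPath) : rho h g ≤ rho g h :=
  le_iInf₂ fun _ hl => (rho_le (invFunOn_mem_Lam hl)).trans
    (max_le_max (gamma_invFunOn_le hl) (dSup_invFunOn_le hl))

theorem rho_comm (g h : GPath) : rho g h = rho h g :=
  le_antisymm (rho_le_rho_swap h g) (rho_le_rho_swap g h)

theorem gamma_comp_le (hl : l ∈ Lam f g) :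
    gamma f (l' ∘ l) ≤ gamma f l + gamma g l' := by
  have hmaps := (bijOn_of_mem_Lam hl).mapsTo
  refine gamma_le fun t s ht hts hs => ?_
  have ht' : t ∈ Icc f.σ 2 := ⟨ht, hts.le.trans hs⟩
  have hs' : s ∈ Icc f.σ 2 := ⟨ht.trans hts.le, hs⟩
  have hlts : l t < l s := hl.1 ht' hs' hts
  calc ENNReal.ofReal |Real.log ((l' (l s) - l' (l t)) / (s - t))|
      ≤ ENNReal.ofReal (|Real.log ((l s - l t) / (s - t))| +
          |Real.log ((l' (l s) - l' (l t)) / (l s - l t))|) :=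
        ENNReal.ofReal_le_ofReal (Real.abs_log_div_le_add (sub_ne_zero.2 hlts.ne'))
    _ ≤ ENNReal.ofReal |Real.log ((l s - l t) / (s - t))| +
          ENNReal.ofReal |Real.log ((l' (l s) - l' (l t)) / (l s - l t))| :=
        ENNReal.ofReal_add_le
    _ ≤ gamma f l + gamma g l' :=
        add_le_add (le_gamma ht hts hs) (le_gamma (hmaps ht').1 hlts (hmaps hs').2)

theorem comp_mem_Lam (hl : l ∈ Lam f g) (hl' : l' ∈ Lam g h) : l' ∘ l ∈ Lam f h :=
  ⟨hl'.1.comp hl.1 (bijOn_of_mem_Lam hl).mapsTo, by rw [image_comp, hl.2.1, hl'.2.1],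
    ne_top_of_le_ne_top (ENNReal.add_ne_top.2 ⟨hl.2.2, hl'.2.2⟩) (gamma_comp_le hl)⟩

theorem dSup_comp_le (hl : l ∈ Lam f g) :
    dSup f h (l' ∘ l) ≤ dSup f g l + dSup g h l' := by
  refine dSup_le fun t ht => ?_
  calc ENNReal.ofReal |f.f t - h.f (l' (l t))|
      ≤ ENNReal.ofReal (|f.f t - g.f (l t)| + |g.f (l t) - h.f (l' (l t))|) :=
        ENNReal.ofReal_le_ofReal (abs_sub_le _ _ _)
    _ ≤ ENNReal.ofReal |f.f t - g.f (l t)| + ENNReal.ofReal |g.f (l t) - h.f (l' (l t))| :=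
        ENNReal.ofReal_add_le
    _ ≤ dSup f g l + dSup g h l' :=
        add_le_add (le_dSup ht) (le_dSup ((bijOn_of_mem_Lam hl).mapsTo ht))

theorem rho_triangle (f g h : GPath) : rho f h ≤ rho f g + rho g h :=
  ENNReal.le_iInf₂_add_iInf₂ fun _ hl _ hl' => (rho_le (comp_mem_Lam hl hl')).trans <|
    (max_le_max (gamma_comp_le hl) (dSup_comp_le hl)).trans max_add_add_le_max_add_max

theorem abs_apply_sub_le_of_gamma_le_one (hσ : g.σ = h.σ) (hl : l ∈ Lam g h)
    (hγ : gamma g l ≤ 1) {s : ℝ} (hs : s ∈ Icc g.σ 2) :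
    |l s - s| ≤ 6 * (gamma g l).toReal := by
  have hl0 : l g.σ = g.σ := (apply_σ_of_mem_Lam hl).trans hσ.symm
  rcases hs.1.eq_or_lt with rfl | hσs
  · rw [hl0, sub_self, abs_zero]
    positivity
  set x := (l s - l g.σ) / (s - g.σ)
  have hx : 0 < x := div_pos (sub_pos.2 (hl.1 g.σ_mem_Icc hs hσs)) (sub_pos.2 hσs)
  have hlog : |Real.log x| ≤ (gamma g l).toReal :=
    (ENNReal.ofReal_le_iff_le_toReal (ne_top_of_le_ne_top ENNReal.one_ne_top hγ)).1
      (le_gamma le_rfl hσs hs.2)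
  have hγ1 : (gamma g l).toReal ≤ 1 := ENNReal.toReal_le_of_le_ofReal zero_le_one (by simpa using hγ)
  have hx1 : |x - 1| ≤ 2 * |Real.log x| := by
    simpa [Real.exp_log hx] using Real.abs_exp_sub_one_le (hlog.trans hγ1)
  have hdisp : l s - s = (x - 1) * (s - g.σ) := by
    simp only [x, hl0]
    field_simp [(sub_pos.2 hσs).ne']
    ring
  calc |l s - s| = |x - 1| * (s - g.σ) := by rw [hdisp, abs_mul, abs_of_pos (sub_pos.2 hσs)]
    _ ≤ (2 * (gamma g l).toReal) * 3 :=
        mul_le_mul (by linarith) (by linarith [g.hσ.1, hs.2]) (by linarith) (by positivity)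
    _ = 6 * (gamma g l).toReal := by ring

theorem exists_mem_Lam_close_of_rho_eq_zero (hσ : g.σ = h.σ) (hρ : rho g h = 0) {ε : ℝ}
    (hε : 0 < ε) :
    ∃ l ∈ Lam g h, dSup g h l < ENNReal.ofReal ε ∧ ∀ s ∈ Icc g.σ 2, |l s - s| < ε := by
  set δ := min 1 (ε / 7)
  have hδ : 0 < δ := by positivity
  have hδε : δ ≤ ε / 7 := min_le_right _ _
  have hρδ : rho g h < ENNReal.ofReal δ := by
    rw [hρ]
    exact ENNReal.ofReal_pos.2 hδ
  obtain ⟨l, hl, hmax⟩ : ∃ l ∈ Lam g h, max (gamma g l) (dSup g h l) < ENNReal.ofReal δ := by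
    simpa only [rho, iInf_lt_iff, exists_prop] using hρδ
  obtain ⟨hγ, hd⟩ := max_lt_iff.1 hmax
  refine ⟨l, hl, hd.trans_le (ENNReal.ofReal_le_ofReal (by linarith)), fun s hs => ?_⟩
  have hγ1 : gamma g l ≤ 1 := hγ.le.trans (ENNReal.ofReal_le_one.2 (min_le_left _ _))
  calc |l s - s| ≤ 6 * (gamma g l).toReal := abs_apply_sub_le_of_gamma_le_one hσ hl hγ1 hs
    _ < 6 * δ := by gcongr; exact ENNReal.toReal_lt_of_lt_ofReal hγ
    _ < ε := by linarith

theorem f_eq_of_rho_eq_zero (hσ : g.σ = h.σ) (hρ : rho g h = 0) {t : ℝ} (ht : t ∈ Ico g.σ 2) :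
    g.f t = h.f t := by
  refine eq_of_forall_dist_le fun η hη => ?_
  have hη3 : 0 < η / 3 := by positivity
  have hcont : ∀ᶠ s in 𝓝[≥] t, dist (g.f s) (g.f t) < η / 3 ∧ dist (h.f s) (h.f t) < η / 3 :=
    (Metric.tendsto_nhds.1 (g.right_cont t ht) _ hη3).and
      (Metric.tendsto_nhds.1 (h.right_cont t (hσ ▸ ht)) _ hη3)
  obtain ⟨u, htu, hu⟩ := mem_nhdsGE_iff_exists_Ico_subset.1 hcont
  set r := min (u - t) (2 - t) / 2 with hr_def
  have hr : 0 < r := div_pos (lt_min (sub_pos.2 htu) (sub_pos.2 ht.2)) two_pos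
  have hru : 2 * r ≤ u - t := by linarith [min_le_left (u - t) (2 - t)]
  have hr2 : r ≤ 2 - t := by linarith [min_le_right (u - t) (2 - t)]
  obtain ⟨l, -, hd, hdisp⟩ := exists_mem_Lam_close_of_rho_eq_zero hσ hρ (lt_min hη3 hr)
  have hs : t + r ∈ Icc g.σ 2 := ⟨by linarith [ht.1], by linarith⟩
  -- `|l s - s| < r` keeps both `s := t + r` and `l s` inside `[t, u)`.
  obtain ⟨hls₁, hls₂⟩ := abs_lt.1 ((hdisp _ hs).trans_le (min_le_right _ _))
  have hgs := (hu (show t + r ∈ Ico t u from ⟨by linarith, by linarith⟩)).1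
  have hhs := (hu (show l (t + r) ∈ Ico t u from ⟨by linarith, by linarith⟩)).2
  have hgh : dist (g.f (t + r)) (h.f (l (t + r))) < η / 3 :=
    ((ENNReal.ofReal_lt_ofReal_iff (lt_min hη3 hr)).1 ((le_dSup hs).trans_lt hd)).trans_le
      (min_le_left _ _)
  calc dist (g.f t) (h.f t)
      ≤ dist (g.f t) (g.f (t + r)) + dist (g.f (t + r)) (h.f (l (t + r))) +
          dist (h.f (l (t + r))) (h.f t) := dist_triangle4 _ _ _ _
    _ ≤ η := by linarith [dist_comm (g.f t) (g.f (t + r))]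

theorem eq_of_rho_eq_zero (hσ : g.σ = h.σ) (hρ : rho g h = 0) : g = h := by
  refine GPath.ext hσ (funext fun t => ?_)
  rcases le_or_gt t g.σ with hle | hgt
  · rw [g.ext_left t hle, h.ext_left t (hσ ▸ hle), ← hσ]
    exact f_eq_of_rho_eq_zero hσ hρ ⟨le_rfl, g.σ_lt_two⟩
  rcases lt_or_ge t 2 with h2 | h2
  · exact f_eq_of_rho_eq_zero hσ hρ ⟨hgt.le, h2⟩
  have h12 : (2 : ℝ) ∈ Icc (1 : ℝ) 2 := ⟨one_le_two, le_rfl⟩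
  rw [g.ext_right t h2, h.ext_right t h2, g.const_tail 2 h12, h.const_tail 2 h12]
  exact f_eq_of_rho_eq_zero hσ hρ ⟨g.hσ.2, one_lt_two⟩

end TimeChanges

theorem Gdist_eq_toReal (g h : GPath) : Gdist g h = (max (rho g h) (edist g.σ h.σ)).toReal := by
  rw [Gdist, edist_dist, Real.dist_eq]

theorem max_rho_edist_ne_top (g h : GPath) : max (rho g h) (edist g.σ h.σ) ≠ ⊤ :=
  max_ne_top (rho_ne_top g h) (edist_ne_top _ _)

/-- `d` is a metric on `G`: it is nonnegative, vanishes exactly on the diagonal,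
is symmetric, and satisfies the triangle inequality. -/
theorem Gdist_is_metric :
    (∀ g h : GPath, 0 ≤ Gdist g h) ∧
    (∀ g h : GPath, Gdist g h = 0 ↔ g = h) ∧
    (∀ g h : GPath, Gdist g h = Gdist h g) ∧
    (∀ f g h : GPath, Gdist f h ≤ Gdist f g + Gdist g h) := by
  refine ⟨fun g h => ENNReal.toReal_nonneg, fun g h => ?_, fun g h => ?_, fun f g h => ?_⟩
  · rw [Gdist_eq_toReal, ENNReal.toReal_eq_zero_iff, or_iff_left (max_rho_edist_ne_top g h),
      max_eq_zero, edist_eq_zero]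
    refine ⟨fun ⟨hρ, hσ⟩ => eq_of_rho_eq_zero hσ hρ, ?_⟩
    rintro rfl
    exact ⟨rho_self g, rfl⟩
  · rw [Gdist_eq_toReal, Gdist_eq_toReal, rho_comm, edist_comm]
  · simp only [Gdist_eq_toReal]
    exact ENNReal.toReal_le_add
      ((max_le_max (rho_triangle f g h) (edist_triangle _ _ _)).trans max_add_add_le_max_add_max)
      (max_rho_edist_ne_top f g) (max_rho_edist_ne_top g h)
end

section
/- Let $U_1, U_2, V$ be i.i.d. uniform random variables on $[-r, r]$, $r>0$, and write $U^{(1)} = \min(U_1, U_2, V)$. Set $Z_1 = \min(U_1, U_2)$. Then conditional on the event $\{V = U^{(1)}\}$ (i.e. $V < Z_1$), the random variables $Z_1 - V$ and $V - (-r)$ have the same distribution; and conditional on $\{V \ne U^{(1)}\}$ (i.e. $V > Z_1$), the random variables $V - Z_1$ and $r - V$ have the same distribution. -/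
open MeasureTheory ProbabilityTheory

/-- The uniform probability measure on the interval `[a, b]`. -/
noncomputable def uniformIcc (a b : ℝ) : Measure ℝ :=
  (ENNReal.ofReal (b - a))⁻¹ • (volume.restrict (Set.Icc a b))

/-!
Write `W = min U₁ U₂`; it is independent of `V` and lies in `[-r, r]` almost surely. For a fixed
value `w`, on `{V < w}` the uniform variable `V` is uniform on `[-r, w]`, and the reflection
`v ↦ w - r - v` of that interval exchanges `w - V` with `V + r`; symmetrically on `{V > w}`
with `[w, r]`. Integrating over the law of `W` (Fubini) gives both identities.
-/

open Set

namespace ProbabilityTheory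

variable {Ω β γ : Type*} [MeasurableSpace Ω] [MeasurableSpace β] [MeasurableSpace γ]
  {μ : Measure Ω} {X : Ω → β} {Y : Ω → γ}

theorem IndepFun.measure_preimage_prodMk_eq [IsFiniteMeasure μ] (hXY : IndepFun X Y μ) (hX : Measurable X)
    (hY : Measurable Y) {C D : Set (β × γ)} (hC : MeasurableSet C) (hD : MeasurableSet D)
    (hCD : ∀ᵐ x ∂(μ.map X), μ.map Y (Prod.mk x ⁻¹' C) = μ.map Y (Prod.mk x ⁻¹' D)) :
    μ ((fun ω => (X ω, Y ω)) ⁻¹' C) = μ ((fun ω => (X ω, Y ω)) ⁻¹' D) := by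
  have hlaw := (indepFun_iff_map_prod_eq_prod_map_map hX.aemeasurable hY.aemeasurable).mp hXY
  rw [← Measure.map_apply (hX.prodMk hY) hC, ← Measure.map_apply (hX.prodMk hY) hD, hlaw,
    Measure.prod_apply hC, Measure.prod_apply hD]
  exact lintegral_congr_ae hCD

theorem iIndepFun.indepFun_min {U₁ U₂ V : Ω → ℝ} (hindep : iIndepFun ![U₁, U₂, V] μ)
    (hU₁ : Measurable U₁) (hU₂ : Measurable U₂) (hV : Measurable V) :
    IndepFun (fun ω => min (U₁ ω) (U₂ ω)) V μ := by
  have hmeas : ∀ i, Measurable (![U₁, U₂, V] i) := by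
    intro i
    fin_cases i <;> assumption
  exact (hindep.indepFun_prodMk hmeas 0 1 2 (by decide) (by decide)).comp
    (measurable_fst.min measurable_snd) measurable_id

end ProbabilityTheory

theorem volume_Icc_inter_preimage_const_sub_eq_sub_const (a b : ℝ) (A : Set ℝ) :
    volume (Icc a b ∩ (b - ·) ⁻¹' A) = volume (Icc a b ∩ (· - a) ⁻¹' A) := by
  have hreflect : Icc a b ∩ (b - ·) ⁻¹' A = (a + b - ·) ⁻¹' (Icc a b ∩ (· - a) ⁻¹' A) := by
    ext v
    simp only [mem_inter_iff, mem_Icc, mem_preimage]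
    constructor <;> rintro ⟨⟨h1, h2⟩, h3⟩ <;> refine ⟨⟨by linarith, by linarith⟩, ?_⟩ <;>
      convert h3 using 1 <;> ring
  rw [hreflect]
  exact (Measure.measurePreserving_sub_left volume (a + b)).measure_preimage_equiv
    (f := MeasurableEquiv.subLeft (a + b)) _

theorem volume_setOf_lt_and_inter_Icc {a b w : ℝ} (hw : w ≤ b) (p : ℝ → Prop) :
    volume ({v | v < w ∧ p v} ∩ Icc a b) = volume (Icc a w ∩ {v | p v}) := by
  have hIco : {v | v < w ∧ p v} ∩ Icc a b = Ico a w ∩ {v | p v} := by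
    ext v
    simp only [mem_inter_iff, mem_ofPred_eq, mem_Icc, mem_Ico]
    constructor
    · rintro ⟨⟨hvw, hp⟩, hav, -⟩
      exact ⟨⟨hav, hvw⟩, hp⟩
    · rintro ⟨⟨hav, hvw⟩, hp⟩
      exact ⟨⟨hvw, hp⟩, hav, by linarith⟩
  rw [hIco]
  exact measure_congr (Ico_ae_eq_Icc.inter (Filter.EventuallyEq.refl _ _))

theorem volume_setOf_gt_and_inter_Icc {a b w : ℝ} (hw : a ≤ w) (p : ℝ → Prop) :
    volume ({v | w < v ∧ p v} ∩ Icc a b) = volume (Icc w b ∩ {v | p v}) := by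
  have hIoc : {v | w < v ∧ p v} ∩ Icc a b = Ioc w b ∩ {v | p v} := by
    ext v
    simp only [mem_inter_iff, mem_ofPred_eq, mem_Icc, mem_Ioc]
    constructor
    · rintro ⟨⟨hwv, hp⟩, -, hvb⟩
      exact ⟨⟨hwv, hvb⟩, hp⟩
    · rintro ⟨⟨hwv, hvb⟩, hp⟩
      exact ⟨⟨hwv, hp⟩, by linarith, hvb⟩
  rw [hIoc]
  exact measure_congr (Ioc_ae_eq_Icc.inter (Filter.EventuallyEq.refl _ _))

theorem uniformIcc_apply (a b : ℝ) (s : Set ℝ) :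
    uniformIcc a b s = (ENNReal.ofReal (b - a))⁻¹ * volume (s ∩ Icc a b) := by
  rw [uniformIcc, Measure.smul_apply, Measure.restrict_apply' measurableSet_Icc, smul_eq_mul]

theorem uniformIcc_setOf_lt_and_sub_mem {a b w : ℝ} (hw : w ≤ b) (A : Set ℝ) :
    uniformIcc a b {v | v < w ∧ w - v ∈ A} = uniformIcc a b {v | v < w ∧ v - a ∈ A} := by
  rw [uniformIcc_apply, uniformIcc_apply, volume_setOf_lt_and_inter_Icc hw,
    volume_setOf_lt_and_inter_Icc hw]
  exact congrArg _ (volume_Icc_inter_preimage_const_sub_eq_sub_const a w A)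

theorem uniformIcc_setOf_gt_and_sub_mem {a b w : ℝ} (hw : a ≤ w) (A : Set ℝ) :
    uniformIcc a b {v | w < v ∧ v - w ∈ A} = uniformIcc a b {v | w < v ∧ b - v ∈ A} := by
  rw [uniformIcc_apply, uniformIcc_apply, volume_setOf_gt_and_inter_Icc hw,
    volume_setOf_gt_and_inter_Icc hw]
  exact congrArg _ (volume_Icc_inter_preimage_const_sub_eq_sub_const w b A).symm

theorem ae_mem_Icc_of_map_eq_uniformIcc {Ω : Type*} [MeasurableSpace Ω] {μ : Measure Ω}
    {X : Ω → ℝ} {a b : ℝ} (hX : Measurable X) (hlaw : μ.map X = uniformIcc a b) :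
    ∀ᵐ ω ∂μ, X ω ∈ Icc a b := by
  refine (ae_map_iff hX.aemeasurable measurableSet_Icc).mp ?_
  rw [hlaw, uniformIcc]
  exact Measure.ae_smul_measure (ae_restrict_mem measurableSet_Icc) _

theorem cond_dist_selective_event_general
    {Ω : Type*} [MeasureSpace Ω] [IsProbabilityMeasure (ℙ : Measure Ω)]
    (r : ℝ) (U₁ U₂ V : Ω → ℝ)
    (hU₁ : Measurable U₁) (hU₂ : Measurable U₂) (hV : Measurable V)
    (hindep : iIndepFun ![U₁, U₂, V] ℙ)
    (hU₁law : Measure.map U₁ ℙ = uniformIcc (-r) r)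
    (hU₂law : Measure.map U₂ ℙ = uniformIcc (-r) r)
    (hVlaw : Measure.map V ℙ = uniformIcc (-r) r) :
    (∀ A : Set ℝ, MeasurableSet A →
      (ℙ[|{ω | V ω < min (U₁ ω) (U₂ ω)}]) {ω | min (U₁ ω) (U₂ ω) - V ω ∈ A} =
        (ℙ[|{ω | V ω < min (U₁ ω) (U₂ ω)}]) {ω | V ω + r ∈ A}) ∧
    (∀ A : Set ℝ, MeasurableSet A →
      (ℙ[|{ω | min (U₁ ω) (U₂ ω) < V ω}]) {ω | V ω - min (U₁ ω) (U₂ ω) ∈ A} =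
        (ℙ[|{ω | min (U₁ ω) (U₂ ω) < V ω}]) {ω | r - V ω ∈ A}) := by
  set W : Ω → ℝ := fun ω => min (U₁ ω) (U₂ ω)
  have hW : Measurable W := hU₁.min hU₂
  have hWV : IndepFun W V ℙ := hindep.indepFun_min hU₁ hU₂ hV
  have hW_mem : ∀ᵐ w ∂(Measure.map W ℙ), w ∈ Icc (-r) r := by
    refine (ae_map_iff hW.aemeasurable measurableSet_Icc).mpr ?_
    filter_upwards [ae_mem_Icc_of_map_eq_uniformIcc hU₁ hU₁law,
      ae_mem_Icc_of_map_eq_uniformIcc hU₂ hU₂law] with ω h₁ h₂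
    exact ⟨le_min h₁.1 h₂.1, (min_le_left _ _).trans h₁.2⟩
  refine ⟨fun A hA => ?_, fun A hA => ?_⟩
  · rw [cond_apply (measurableSet_lt hV hW), cond_apply (measurableSet_lt hV hW)]
    congr 1
    refine hWV.measure_preimage_prodMk_eq hW hV
      (C := {p | p.2 < p.1 ∧ p.1 - p.2 ∈ A}) (D := {p | p.2 < p.1 ∧ p.2 + r ∈ A})
      (by measurability) (by measurability) ?_
    filter_upwards [hW_mem] with w hw
    rw [hVlaw]
    simp_rw [← sub_neg_eq_add _ r]
    exact uniformIcc_setOf_lt_and_sub_mem hw.2 A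
  · rw [cond_apply (measurableSet_lt hW hV), cond_apply (measurableSet_lt hW hV)]
    congr 1
    refine hWV.measure_preimage_prodMk_eq hW hV
      (C := {p | p.1 < p.2 ∧ p.2 - p.1 ∈ A}) (D := {p | p.1 < p.2 ∧ r - p.2 ∈ A})
      (by measurability) (by measurability) ?_
    filter_upwards [hW_mem] with w hw
    rw [hVlaw]
    exact uniformIcc_setOf_gt_and_sub_mem hw.1 A

/-- If `U₁, U₂, V` are i.i.d. uniform on `[-r, r]` and `Z₁ = min(U₁, U₂)`, then
conditionally on `{V < Z₁}` the random variables `Z₁ - V` and `V + r` have the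
same distribution, and conditionally on `{V > Z₁}` the random variables `V - Z₁`
and `r - V` have the same distribution. -/
theorem cond_dist_selective_event
    {Ω : Type*} [MeasureSpace Ω] [IsProbabilityMeasure (ℙ : Measure Ω)]
    (r : ℝ) (hr : 0 < r) (U₁ U₂ V : Ω → ℝ)
    (hU₁ : Measurable U₁) (hU₂ : Measurable U₂) (hV : Measurable V)
    (hindep : iIndepFun ![U₁, U₂, V] ℙ)
    (hU₁law : Measure.map U₁ ℙ = uniformIcc (-r) r)
    (hU₂law : Measure.map U₂ ℙ = uniformIcc (-r) r)
    (hVlaw : Measure.map V ℙ = uniformIcc (-r) r) :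
    (∀ A : Set ℝ, MeasurableSet A →
      (ℙ[|{ω | V ω < min (U₁ ω) (U₂ ω)}]) {ω | min (U₁ ω) (U₂ ω) - V ω ∈ A} =
        (ℙ[|{ω | V ω < min (U₁ ω) (U₂ ω)}]) {ω | V ω + r ∈ A}) ∧
    (∀ A : Set ℝ, MeasurableSet A →
      (ℙ[|{ω | min (U₁ ω) (U₂ ω) < V ω}]) {ω | V ω - min (U₁ ω) (U₂ ω) ∈ A} =
        (ℙ[|{ω | min (U₁ ω) (U₂ ω) < V ω}]) {ω | r - V ω ∈ A}) :=
  cond_dist_selective_event_general r U₁ U₂ V hU₁ hU₂ hV hindep hU₁law hU₂law hVlaw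
end
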